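/- Linear-system characterization of optimizers (Theorem 1, core claim): suppose random variables X : Ω → 𝒳, Y : Ω → 𝒴, U : Ω → 𝒰 (finite-valued, on a common probability space) satisfy I[X:U] = 0, I[X:U|Y] = 0, and H[Y|(X,U)] = 0. Define a : 𝒴 → ℝ by a(y) = H[U | Y ← y] if μ(Y = y) > 0 and a(y) = 0 otherwise. Then: (i) a(y) ≥ 0 for all y; (ii) for every x ∈ 𝒳 with μ(X = x) > 0, Σ_{y ∈ 𝒴} (μ(Y = y) − μ(Y = y | X = x)) · a(y) = H[Y | X ← x] − H[Y|X]; and (iii) H[U] = H[Y|X] + Σ_{y ∈ 𝒴} μ(Y = y) · a(y). In particular, the vector a is a nonnegative solution of the linear system A_{XY} a = b_{XY}, where A_{XY} has entries A(x,y) = μ(Y = y) − μ(Y = y | X = x) and b_{XY} has entries b(x) = H[Y | X ← x] − H[Y|X]. -/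
import Mathlib


open MeasureTheory ProbabilityTheory Real

noncomputable section

variable {Ω : Type*} [MeasurableSpace Ω]

/-- Shannon entropy (natural logarithm) of a finite-valued random variable `Z` under `μ`. -/
def ent {S : Type*} [Fintype S] (μ : Measure Ω) (Z : Ω → S) : ℝ :=
  ∑ z : S, Real.negMulLog (μ (Z ⁻¹' {z})).toReal

/-- Conditional entropy `H[Z₁ | Z₂] = H[(Z₁,Z₂)] - H[Z₂]`. -/
def condEnt {S T : Type*} [Fintype S] [Fintype T] (μ : Measure Ω)
    (Z₁ : Ω → S) (Z₂ : Ω → T) : ℝ :=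
  ent μ (fun ω => (Z₁ ω, Z₂ ω)) - ent μ Z₂

/-- Mutual information `I[Z₁ : Z₂] = H[Z₁] + H[Z₂] - H[(Z₁,Z₂)]`. -/
def mutInfo {S T : Type*} [Fintype S] [Fintype T] (μ : Measure Ω)
    (Z₁ : Ω → S) (Z₂ : Ω → T) : ℝ :=
  ent μ Z₁ + ent μ Z₂ - ent μ (fun ω => (Z₁ ω, Z₂ ω))

/-- Conditional mutual information
`I[Z₁ : Z₂ | Z₃] = H[(Z₁,Z₃)] + H[(Z₂,Z₃)] - H[(Z₁,Z₂,Z₃)] - H[Z₃]`. -/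
def condMutInfo {S T R : Type*} [Fintype S] [Fintype T] [Fintype R] (μ : Measure Ω)
    (Z₁ : Ω → S) (Z₂ : Ω → T) (Z₃ : Ω → R) : ℝ :=
  ent μ (fun ω => (Z₁ ω, Z₃ ω)) + ent μ (fun ω => (Z₂ ω, Z₃ ω))
    - ent μ (fun ω => (Z₁ ω, Z₂ ω, Z₃ ω)) - ent μ Z₃

/-! ### Auxiliary lemmas -/

lemma meas_pre {S : Type*} [MeasurableSpace S] [MeasurableSingletonClass S]
    {Z : Ω → S} (hZ : Measurable Z) (z : S) : MeasurableSet (Z ⁻¹' {z}) :=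
  hZ (measurableSet_singleton z)

lemma sum_meas_inter {S : Type*} [Fintype S] [MeasurableSpace S] [MeasurableSingletonClass S]
    (μ : Measure Ω) {Z : Ω → S} (hZ : Measurable Z) (t : Set Ω) :
    ∑ z : S, μ (Z ⁻¹' {z} ∩ t) = μ t := by
  have h : ∀ z : S, μ (Z ⁻¹' {z} ∩ t) = μ.restrict t (Z ⁻¹' {z}) := fun z =>
    (Measure.restrict_apply (meas_pre hZ z)).symm
  simp_rw [h]
  rw [sum_measure_preimage_singleton Finset.univ (fun z _ => meas_pre hZ z)]
  simp [Measure.restrict_apply MeasurableSet.univ]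

lemma sum_meas_inter_toReal {S : Type*} [Fintype S] [MeasurableSpace S]
    [MeasurableSingletonClass S]
    (μ : Measure Ω) [IsFiniteMeasure μ] {Z : Ω → S} (hZ : Measurable Z) (t : Set Ω) :
    ∑ z : S, (μ (Z ⁻¹' {z} ∩ t)).toReal = (μ t).toReal := by
  rw [← ENNReal.toReal_sum (fun z _ => measure_ne_top μ _), sum_meas_inter μ hZ t]

lemma pmf_sum_one {S : Type*} [Fintype S] [MeasurableSpace S] [MeasurableSingletonClass S]
    (μ : Measure Ω) [IsProbabilityMeasure μ] {Z : Ω → S} (hZ : Measurable Z) :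
    ∑ z : S, (μ (Z ⁻¹' {z})).toReal = 1 := by
  have := sum_meas_inter_toReal μ hZ Set.univ
  simpa using this

lemma ent_nonneg {S : Type*} [Fintype S] (μ : Measure Ω) [IsProbabilityMeasure μ] (Z : Ω → S) :
    0 ≤ ent μ Z :=
  Finset.sum_nonneg fun _ _ => negMulLog_nonneg ENNReal.toReal_nonneg
    (by simpa using ENNReal.toReal_mono ENNReal.one_ne_top prob_le_one)

lemma ent_cond_zero {S : Type*} [Fintype S] (μ : Measure Ω) {s : Set Ω} (h : μ s = 0)
    (Z : Ω → S) : ent (μ[|s]) Z = 0 := by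
  rw [cond_eq_zero_of_meas_eq_zero h]
  simp [ent]

lemma ent_comp_equiv {S T : Type*} [Fintype S] [Fintype T] (μ : Measure Ω) (Z : Ω → S)
    (e : S ≃ T) : ent μ (fun ω => e (Z ω)) = ent μ Z := by
  refine (Fintype.sum_bijective e e.bijective _ _ fun s => ?_).symm
  have h : (fun ω => e (Z ω)) ⁻¹' {e s} = Z ⁻¹' {s} := by ext ω; simp
  rw [h]

lemma cond_toReal {μ : Measure Ω} [IsFiniteMeasure μ] {s : Set Ω} (hs : MeasurableSet s)
    (t : Set Ω) : ((μ[|s]) t).toReal = (μ (s ∩ t)).toReal / (μ s).toReal := by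
  rw [cond_apply hs, ENNReal.toReal_mul, ENNReal.toReal_inv, inv_mul_eq_div]

lemma meas_inter_toReal {μ : Measure Ω} [IsFiniteMeasure μ] {s : Set Ω} (hs : MeasurableSet s)
    (t : Set Ω) : (μ (s ∩ t)).toReal = (μ s).toReal * ((μ[|s]) t).toReal := by
  rcases eq_or_ne (μ s) 0 with h | h
  · have h2 : μ (s ∩ t) = 0 := measure_mono_null Set.inter_subset_left h
    simp [h, h2]
  · rw [cond_toReal hs, mul_div_cancel₀]
    exact ENNReal.toReal_ne_zero.mpr ⟨h, measure_ne_top μ s⟩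

lemma cond_meas_ne_zero {μ : Measure Ω} {s : Set Ω} (hs : MeasurableSet s) {t : Set Ω}
    (h : (μ[|s]) t ≠ 0) : μ (s ∩ t) ≠ 0 := by
  intro h0
  exact h (by rw [cond_apply hs, h0, mul_zero])

/-- Chain rule for entropy of a pair. -/
lemma ent_pair {S T : Type*} [Fintype S] [MeasurableSpace S] [MeasurableSingletonClass S]
    [Fintype T] [MeasurableSpace T] [MeasurableSingletonClass T]
    (μ : Measure Ω) [IsProbabilityMeasure μ] {Z₁ : Ω → S} {Z₂ : Ω → T}
    (h1 : Measurable Z₁) (h2 : Measurable Z₂) :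
    ent μ (fun ω => (Z₁ ω, Z₂ ω)) =
      ent μ Z₂ + ∑ t : T, (μ (Z₂ ⁻¹' {t})).toReal * ent (μ[|Z₂ ⁻¹' {t}]) Z₁ := by
  have hpre : ∀ (s : S) (t : T),
      (fun ω => (Z₁ ω, Z₂ ω)) ⁻¹' {(s, t)} = Z₂ ⁻¹' {t} ∩ Z₁ ⁻¹' {s} := by
    intro s t; ext ω
    simp [Set.mem_preimage, Prod.ext_iff, and_comm]
  have hRHS : ent μ Z₂ + ∑ t : T, (μ (Z₂ ⁻¹' {t})).toReal * ent (μ[|Z₂ ⁻¹' {t}]) Z₁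
      = ∑ t : T, (Real.negMulLog (μ (Z₂ ⁻¹' {t})).toReal
          + (μ (Z₂ ⁻¹' {t})).toReal * ent (μ[|Z₂ ⁻¹' {t}]) Z₁) := by
    rw [Finset.sum_add_distrib]; rfl
  rw [hRHS, ent, Fintype.sum_prod_type, Finset.sum_comm]
  refine Finset.sum_congr rfl fun t _ => ?_
  rcases eq_or_ne (μ (Z₂ ⁻¹' {t})) 0 with h | h
  · have hz : ∀ s : S, μ ((fun ω => (Z₁ ω, Z₂ ω)) ⁻¹' {(s, t)}) = 0 := fun s => by
      rw [hpre]; exact measure_mono_null Set.inter_subset_left h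
    simp [hz, h]
  · haveI : IsProbabilityMeasure (μ[|Z₂ ⁻¹' {t}]) := cond_isProbabilityMeasure h
    calc ∑ s : S, Real.negMulLog (μ ((fun ω => (Z₁ ω, Z₂ ω)) ⁻¹' {(s, t)})).toReal
        = ∑ s : S, (((μ[|Z₂ ⁻¹' {t}]) (Z₁ ⁻¹' {s})).toReal
              * Real.negMulLog (μ (Z₂ ⁻¹' {t})).toReal
            + (μ (Z₂ ⁻¹' {t})).toReal
              * Real.negMulLog ((μ[|Z₂ ⁻¹' {t}]) (Z₁ ⁻¹' {s})).toReal) := by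
          refine Finset.sum_congr rfl fun s _ => ?_
          rw [hpre, meas_inter_toReal (meas_pre h2 t), Real.negMulLog_mul]
      _ = _ := by
          rw [Finset.sum_add_distrib, ← Finset.sum_mul, pmf_sum_one _ h1, one_mul,
            ← Finset.mul_sum]
          rfl

section MutInfo

variable {𝒳 𝒰 : Type*} [Fintype 𝒳] [MeasurableSpace 𝒳] [MeasurableSingletonClass 𝒳]
  [Fintype 𝒰] [MeasurableSpace 𝒰] [MeasurableSingletonClass 𝒰]

lemma pmf_mix (μ : Measure Ω) [IsProbabilityMeasure μ] {X : Ω → 𝒳} (hX : Measurable X)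
    (t : Set Ω) :
    ∑ x : 𝒳, (μ (X ⁻¹' {x})).toReal * ((μ[|X ⁻¹' {x}]) t).toReal = (μ t).toReal := by
  have h : ∀ x : 𝒳, (μ (X ⁻¹' {x})).toReal * ((μ[|X ⁻¹' {x}]) t).toReal
      = (μ (X ⁻¹' {x} ∩ t)).toReal := fun x => (meas_inter_toReal (meas_pre hX x) t).symm
  simp_rw [h]
  exact sum_meas_inter_toReal μ hX t

omit [MeasurableSpace 𝒳] [MeasurableSingletonClass 𝒳]
  [MeasurableSpace 𝒰] [MeasurableSingletonClass 𝒰] in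
lemma ent_pair_swap (μ : Measure Ω) (X : Ω → 𝒳) (U : Ω → 𝒰) :
    ent μ (fun ω => (X ω, U ω)) = ent μ (fun ω => (U ω, X ω)) := by
  have h := ent_comp_equiv μ (fun ω => (U ω, X ω)) (Equiv.prodComm 𝒰 𝒳)
  have h2 : (fun ω => (Equiv.prodComm 𝒰 𝒳) (U ω, X ω)) = fun ω => (X ω, U ω) := rfl
  rw [h2] at h
  exact h

lemma mutInfo_decomp (μ : Measure Ω) [IsProbabilityMeasure μ] {X : Ω → 𝒳} {U : Ω → 𝒰}
    (hX : Measurable X) (hU : Measurable U) :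
    mutInfo μ X U = ∑ u : 𝒰,
      (Real.negMulLog (∑ x : 𝒳, (μ (X ⁻¹' {x})).toReal * ((μ[|X ⁻¹' {x}]) (U ⁻¹' {u})).toReal)
        - ∑ x : 𝒳, (μ (X ⁻¹' {x})).toReal
            * Real.negMulLog ((μ[|X ⁻¹' {x}]) (U ⁻¹' {u})).toReal) := by
  rw [mutInfo, ent_pair_swap μ X U, ent_pair μ hU hX, Finset.sum_sub_distrib]
  have h1 : ∀ u : 𝒰, Real.negMulLog (μ (U ⁻¹' {u})).toReal
      = Real.negMulLog (∑ x : 𝒳, (μ (X ⁻¹' {x})).toReal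
          * ((μ[|X ⁻¹' {x}]) (U ⁻¹' {u})).toReal) := fun u => by rw [pmf_mix μ hX]
  have h2 : ∑ x : 𝒳, (μ (X ⁻¹' {x})).toReal * ent (μ[|X ⁻¹' {x}]) U
      = ∑ u : 𝒰, ∑ x : 𝒳, (μ (X ⁻¹' {x})).toReal
          * Real.negMulLog ((μ[|X ⁻¹' {x}]) (U ⁻¹' {u})).toReal := by
    rw [Finset.sum_comm]
    exact Finset.sum_congr rfl fun x _ => Finset.mul_sum _ _ _
  have hentU : ent μ U = ∑ u : 𝒰, Real.negMulLog (∑ x : 𝒳, (μ (X ⁻¹' {x})).toReal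
      * ((μ[|X ⁻¹' {x}]) (U ⁻¹' {u})).toReal) := Finset.sum_congr rfl fun u _ => h1 u
  rw [hentU, h2]
  ring

lemma jensen_term (μ : Measure Ω) [IsProbabilityMeasure μ] {X : Ω → 𝒳} (hX : Measurable X)
    (r : 𝒳 → ℝ) (hr : ∀ x, 0 ≤ r x) :
    ∑ x : 𝒳, (μ (X ⁻¹' {x})).toReal * Real.negMulLog (r x)
      ≤ Real.negMulLog (∑ x : 𝒳, (μ (X ⁻¹' {x})).toReal * r x) := by
  have h := Real.concaveOn_negMulLog.le_map_sum (t := Finset.univ)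
    (w := fun x : 𝒳 => (μ (X ⁻¹' {x})).toReal) (p := r)
    (fun x _ => ENNReal.toReal_nonneg) (pmf_sum_one μ hX) (fun x _ => hr x)
  simpa [smul_eq_mul] using h

lemma mutInfo_nonneg (μ : Measure Ω) [IsProbabilityMeasure μ] {X : Ω → 𝒳} {U : Ω → 𝒰}
    (hX : Measurable X) (hU : Measurable U) : 0 ≤ mutInfo μ X U := by
  rw [mutInfo_decomp μ hX hU]
  refine Finset.sum_nonneg fun u _ => sub_nonneg.mpr ?_
  exact jensen_term μ hX _ (fun _ => ENNReal.toReal_nonneg)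

/-- Equality case: zero mutual information gives (toReal-level) independence. -/
lemma cond_dist_of_mutInfo_zero (μ : Measure Ω) [IsProbabilityMeasure μ] {X : Ω → 𝒳}
    {U : Ω → 𝒰} (hX : Measurable X) (hU : Measurable U) (h : mutInfo μ X U = 0) (x : 𝒳) (u : 𝒰)
    (hx : μ (X ⁻¹' {x}) ≠ 0) :
    ((μ[|X ⁻¹' {x}]) (U ⁻¹' {u})).toReal = (μ (U ⁻¹' {u})).toReal := by
  rw [mutInfo_decomp μ hX hU] at h
  have hterm := (Finset.sum_eq_zero_iff_of_nonneg (fun u _ => sub_nonneg.mpr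
    (jensen_term μ hX _ (fun _ => ENNReal.toReal_nonneg)))).mp h u (Finset.mem_univ u)
  have heq : Real.negMulLog (∑ x : 𝒳,
        (μ (X ⁻¹' {x})).toReal • ((μ[|X ⁻¹' {x}]) (U ⁻¹' {u})).toReal)
      = ∑ x : 𝒳, (μ (X ⁻¹' {x})).toReal
          • Real.negMulLog ((μ[|X ⁻¹' {x}]) (U ⁻¹' {u})).toReal := by
    simpa [smul_eq_mul] using sub_eq_zero.mp hterm
  have hkey := (Real.strictConcaveOn_negMulLog.map_sum_eq_iff' (t := Finset.univ)
    (w := fun x : 𝒳 => (μ (X ⁻¹' {x})).toReal)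
    (p := fun x : 𝒳 => ((μ[|X ⁻¹' {x}]) (U ⁻¹' {u})).toReal)
    (fun x _ => ENNReal.toReal_nonneg) (pmf_sum_one μ hX)
    (fun x _ => ENNReal.toReal_nonneg)).mp heq x (Finset.mem_univ x)
    (ENNReal.toReal_ne_zero.mpr ⟨hx, measure_ne_top μ _⟩)
  rw [hkey]
  simpa [smul_eq_mul] using pmf_mix μ hX (U ⁻¹' {u})

end MutInfo

lemma condMutInfo_decomp {𝒳 𝒰 𝒴 : Type*}
    [Fintype 𝒳] [MeasurableSpace 𝒳] [MeasurableSingletonClass 𝒳]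
    [Fintype 𝒰] [MeasurableSpace 𝒰] [MeasurableSingletonClass 𝒰]
    [Fintype 𝒴] [MeasurableSpace 𝒴] [MeasurableSingletonClass 𝒴]
    (μ : Measure Ω) [IsProbabilityMeasure μ] {X : Ω → 𝒳} {U : Ω → 𝒰} {Y : Ω → 𝒴}
    (hX : Measurable X) (hU : Measurable U) (hY : Measurable Y) :
    condMutInfo μ X U Y = ∑ y : 𝒴, (μ (Y ⁻¹' {y})).toReal * mutInfo (μ[|Y ⁻¹' {y}]) X U := by
  have hXY := ent_pair μ hX hY
  have hUY := ent_pair μ hU hY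
  have hXUY : ent μ (fun ω => (X ω, U ω, Y ω)) = ent μ Y + ∑ y : 𝒴,
      (μ (Y ⁻¹' {y})).toReal * ent (μ[|Y ⁻¹' {y}]) (fun ω => (X ω, U ω)) := by
    have h := ent_pair μ (hX.prodMk hU) hY
    have he : ent μ (fun ω => (X ω, U ω, Y ω)) = ent μ (fun ω => ((X ω, U ω), Y ω)) := by
      have h2 := ent_comp_equiv μ (fun ω => ((X ω, U ω), Y ω)) (Equiv.prodAssoc 𝒳 𝒰 𝒴)
      have h3 : (fun ω => (Equiv.prodAssoc 𝒳 𝒰 𝒴) ((X ω, U ω), Y ω))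
          = fun ω => (X ω, U ω, Y ω) := rfl
      rw [h3] at h2; exact h2
    rw [he, h]
  rw [condMutInfo, hXY, hUY, hXUY]
  simp_rw [mutInfo, mul_sub, mul_add]
  rw [Finset.sum_sub_distrib, Finset.sum_add_distrib]
  ring

/-- Linear-system characterization of optimizers (Theorem 1, core claim):
the vector `a` of conditional entropies `H[U | Y ← y]` is a nonnegative solution of the
linear system `A_{XY} a = b_{XY}`, and `H[U] = H[Y|X] + ∑ y, μ(Y = y) * a y`. -/
theorem optimizer_linear_system {𝒳 𝒴 𝒰 : Type*} [Fintype 𝒳] [Nonempty 𝒳] [MeasurableSpace 𝒳] [MeasurableSingletonClass 𝒳]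
    [Fintype 𝒴] [Nonempty 𝒴] [MeasurableSpace 𝒴] [MeasurableSingletonClass 𝒴]
    [Fintype 𝒰] [Nonempty 𝒰] [MeasurableSpace 𝒰] [MeasurableSingletonClass 𝒰]
    (μ : Measure Ω) [IsProbabilityMeasure μ]
    (X : Ω → 𝒳) (Y : Ω → 𝒴) (U : Ω → 𝒰)
    (hX : Measurable X) (hY : Measurable Y) (hU : Measurable U)
    (h1 : mutInfo μ X U = 0)
    (h2 : condMutInfo μ X U Y = 0)
    (h3 : condEnt μ Y (fun ω => (X ω, U ω)) = 0)
    (a : 𝒴 → ℝ)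
    (ha : ∀ y : 𝒴, a y = if 0 < μ (Y ⁻¹' {y}) then ent (μ[|Y ⁻¹' {y}]) U else 0) :
    (∀ y : 𝒴, 0 ≤ a y) ∧
    (∀ x : 𝒳, 0 < μ (X ⁻¹' {x}) →
      ∑ y : 𝒴, ((μ (Y ⁻¹' {y})).toReal - ((μ[|X ⁻¹' {x}]) (Y ⁻¹' {y})).toReal) * a y
        = ent (μ[|X ⁻¹' {x}]) Y - condEnt μ Y X) ∧
    ent μ U = condEnt μ Y X + ∑ y : 𝒴, (μ (Y ⁻¹' {y})).toReal * a y := by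
  -- the `if` in the definition of `a` is immaterial
  have ha' : ∀ y : 𝒴, a y = ent (μ[|Y ⁻¹' {y}]) U := by
    intro y
    rcases eq_or_ne (μ (Y ⁻¹' {y})) 0 with h | h
    · rw [ha y, if_neg (by simp [h]), ent_cond_zero μ h U]
    · rw [ha y, if_pos (pos_iff_ne_zero.mpr h)]
  -- (i) nonnegativity
  have hann : ∀ y : 𝒴, 0 ≤ a y := by
    intro y
    rw [ha' y]
    rcases eq_or_ne (μ (Y ⁻¹' {y})) 0 with h | h
    · rw [ent_cond_zero μ h U]
    · haveI := cond_isProbabilityMeasure (μ := μ) h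
      exact ent_nonneg _ U
  -- chain rule for (U,Y)
  have hUY : ent μ (fun ω => (U ω, Y ω))
      = ent μ Y + ∑ y : 𝒴, (μ (Y ⁻¹' {y})).toReal * a y := by
    rw [ent_pair μ hU hY]
    congr 1
    exact Finset.sum_congr rfl fun y _ => by rw [ha' y]
  -- permutation identities
  have hswapYX : ent μ (fun ω => (Y ω, X ω)) = ent μ (fun ω => (X ω, Y ω)) :=
    (ent_pair_swap μ X Y).symm
  have htriple : ent μ (fun ω => (X ω, U ω, Y ω)) = ent μ (fun ω => (Y ω, (X ω, U ω))) := by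
    have h := ent_comp_equiv μ (fun ω => (X ω, U ω, Y ω))
      (⟨fun p => (p.2.2, p.1, p.2.1), fun p => (p.2.1, p.2.2, p.1),
        fun _ => rfl, fun _ => rfl⟩ : (𝒳 × 𝒰 × 𝒴) ≃ (𝒴 × 𝒳 × 𝒰))
    exact h.symm
  -- swapped identity for (U,Y)
  have hswapUY : ent μ (fun ω => (U ω, Y ω)) = ent μ (fun ω => (Y ω, U ω)) :=
    ent_pair_swap μ U Y
  -- unfold hypotheses
  simp only [mutInfo] at h1
  simp only [condMutInfo] at h2
  simp only [condEnt] at h3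
  -- part (iii)
  have hiii : ent μ U = condEnt μ Y X + ∑ y : 𝒴, (μ (Y ⁻¹' {y})).toReal * a y := by
    have hsum : ∑ y : 𝒴, (μ (Y ⁻¹' {y})).toReal * a y
        = ent μ (fun ω => (U ω, Y ω)) - ent μ Y := by rw [hUY]; ring
    rw [condEnt, hsum]
    linarith [h1, h2, h3, hswapYX, htriple]
  refine ⟨hann, ?_, hiii⟩
  -- part (ii)
  intro x hx
  have hxne : μ (X ⁻¹' {x}) ≠ 0 := hx.ne'
  set B := X ⁻¹' {x} with hB
  have hmB : MeasurableSet B := meas_pre hX x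
  haveI : IsProbabilityMeasure (μ[|B]) := cond_isProbabilityMeasure hxne
  -- consequences of h2: conditional independence given Y = y
  have h2' : ∀ y : 𝒴, μ (Y ⁻¹' {y}) ≠ 0 → mutInfo (μ[|Y ⁻¹' {y}]) X U = 0 := by
    intro y hy
    have hdec : condMutInfo μ X U Y
        = ∑ y : 𝒴, (μ (Y ⁻¹' {y})).toReal * mutInfo (μ[|Y ⁻¹' {y}]) X U :=
      condMutInfo_decomp μ hX hU hY
    have h2'' : ∑ y : 𝒴, (μ (Y ⁻¹' {y})).toReal * mutInfo (μ[|Y ⁻¹' {y}]) X U = 0 := by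
      rw [← hdec]; simp only [condMutInfo]; linarith [h2]
    have hnn : ∀ y ∈ Finset.univ, (0:ℝ) ≤ (μ (Y ⁻¹' {y})).toReal * mutInfo (μ[|Y ⁻¹' {y}]) X U := by
      intro y _
      rcases eq_or_ne (μ (Y ⁻¹' {y})) 0 with h | h
      · simp [h]
      · haveI := cond_isProbabilityMeasure (μ := μ) h
        exact mul_nonneg ENNReal.toReal_nonneg (mutInfo_nonneg _ hX hU)
    have hzero := (Finset.sum_eq_zero_iff_of_nonneg hnn).mp h2'' y (Finset.mem_univ y)
    have hyne : (μ (Y ⁻¹' {y})).toReal ≠ 0 :=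
      ENNReal.toReal_ne_zero.mpr ⟨hy, measure_ne_top μ _⟩
    exact (mul_eq_zero.mp hzero).resolve_left hyne
  -- consequences of h3: Y is determined by (X,U)
  have h3' : ∀ (x' : 𝒳) (u : 𝒰), μ (X ⁻¹' {x'} ∩ U ⁻¹' {u}) ≠ 0 →
      ent (μ[|X ⁻¹' {x'} ∩ U ⁻¹' {u}]) Y = 0 := by
    intro x' u hxu
    have hW : Measurable (fun ω => (X ω, U ω)) := hX.prodMk hU
    have hpair := ent_pair μ hY hW
    have hsum0 : ∑ w : 𝒳 × 𝒰, (μ ((fun ω => (X ω, U ω)) ⁻¹' {w})).toReal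
        * ent (μ[|(fun ω => (X ω, U ω)) ⁻¹' {w}]) Y = 0 := by
      rw [hpair] at h3; linarith [h3]
    have hnn : ∀ w ∈ Finset.univ, (0:ℝ) ≤ (μ ((fun ω => (X ω, U ω)) ⁻¹' {w})).toReal
        * ent (μ[|(fun ω => (X ω, U ω)) ⁻¹' {w}]) Y := by
      intro w _
      rcases eq_or_ne (μ ((fun ω => (X ω, U ω)) ⁻¹' {w})) 0 with h | h
      · simp [h]
      · haveI := cond_isProbabilityMeasure (μ := μ) h
        exact mul_nonneg ENNReal.toReal_nonneg (ent_nonneg _ Y)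
    have hzero := (Finset.sum_eq_zero_iff_of_nonneg hnn).mp hsum0 (x', u)
      (Finset.mem_univ _)
    have hprew : (fun ω => (X ω, U ω)) ⁻¹' {(x', u)} = X ⁻¹' {x'} ∩ U ⁻¹' {u} := by
      ext ω; simp [Prod.ext_iff]
    rw [hprew] at hzero
    have hne : (μ (X ⁻¹' {x'} ∩ U ⁻¹' {u})).toReal ≠ 0 :=
      ENNReal.toReal_ne_zero.mpr ⟨hxu, measure_ne_top μ _⟩
    exact (mul_eq_zero.mp hzero).resolve_left hne
  -- Step: ent (μ[|B]) U = ent μ U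
  have hentU : ent (μ[|B]) U = ent μ U := by
    unfold ent
    exact Finset.sum_congr rfl fun u _ => by
      rw [cond_dist_of_mutInfo_zero μ hX hU (by simp only [mutInfo]; linarith [h1]) x u hxne]
  -- Step: ent (μ[|B]) (fun ω => (Y ω, U ω)) = ent (μ[|B]) U
  have hYU : ent (μ[|B]) (fun ω => (Y ω, U ω)) = ent (μ[|B]) U := by
    rw [ent_pair (μ[|B]) hY hU]
    have hz : ∑ u : 𝒰, ((μ[|B]) (U ⁻¹' {u})).toReal * ent ((μ[|B])[|U ⁻¹' {u}]) Y = 0 := by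
      refine Finset.sum_eq_zero fun u _ => ?_
      rcases eq_or_ne ((μ[|B]) (U ⁻¹' {u})) 0 with h | h
      · simp [h]
      · have hBu : μ (B ∩ U ⁻¹' {u}) ≠ 0 := cond_meas_ne_zero hmB h
        have hcc : (μ[|B])[|U ⁻¹' {u}] = μ[|B ∩ U ⁻¹' {u}] :=
          cond_cond_eq_cond_inter hmB (meas_pre hU u) μ
        rw [hcc, h3' x u hBu, mul_zero]
    rw [hz, add_zero]
  have hswapUYB : ent (μ[|B]) (fun ω => (U ω, Y ω)) = ent (μ[|B]) U := by
    rw [ent_pair_swap (μ[|B]) U Y, hYU]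
  -- Step: chain rule under μ[|B] with a-values
  have hchainB : ent (μ[|B]) (fun ω => (U ω, Y ω))
      = ent (μ[|B]) Y + ∑ y : 𝒴, ((μ[|B]) (Y ⁻¹' {y})).toReal * a y := by
    rw [ent_pair (μ[|B]) hU hY]
    congr 1
    refine Finset.sum_congr rfl fun y _ => ?_
    rcases eq_or_ne ((μ[|B]) (Y ⁻¹' {y})) 0 with h | h
    · simp [h]
    · have hBy : μ (B ∩ Y ⁻¹' {y}) ≠ 0 := cond_meas_ne_zero hmB h
      have hyne : μ (Y ⁻¹' {y}) ≠ 0 := fun h0 =>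
        hBy (measure_mono_null Set.inter_subset_right h0)
      haveI : IsProbabilityMeasure (μ[|Y ⁻¹' {y}]) := cond_isProbabilityMeasure hyne
      have hcc : (μ[|B])[|Y ⁻¹' {y}] = μ[|B ∩ Y ⁻¹' {y}] :=
        cond_cond_eq_cond_inter hmB (meas_pre hY y) μ
      have hcc2 : (μ[|Y ⁻¹' {y}])[|B] = μ[|Y ⁻¹' {y} ∩ B] :=
        cond_cond_eq_cond_inter (meas_pre hY y) hmB μ
      have hic : B ∩ Y ⁻¹' {y} = Y ⁻¹' {y} ∩ B := Set.inter_comm _ _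
      have hκB : (μ[|Y ⁻¹' {y}]) B ≠ 0 := by
        rw [cond_apply (meas_pre hY y)]
        refine mul_ne_zero (ENNReal.inv_ne_zero.mpr (measure_ne_top μ _)) ?_
        rw [← hic]; exact hBy
      have hmi : mutInfo (μ[|Y ⁻¹' {y}]) X U = 0 := h2' y hyne
      have hfin : ent ((μ[|B])[|Y ⁻¹' {y}]) U = ent (μ[|Y ⁻¹' {y}]) U := by
        rw [hcc, hic, ← hcc2]
        unfold ent
        exact Finset.sum_congr rfl fun u _ => by
          rw [cond_dist_of_mutInfo_zero (μ[|Y ⁻¹' {y}]) hX hU hmi x u hκB]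
      rw [hfin, ha' y]
  -- conclude part (ii)
  have hS1 : ∑ y : 𝒴, ((μ[|B]) (Y ⁻¹' {y})).toReal * a y = ent μ U - ent (μ[|B]) Y := by
    have := hchainB
    rw [hswapUYB, hentU] at this
    linarith [this]
  have hgoal : ∑ y : 𝒴, ((μ (Y ⁻¹' {y})).toReal - ((μ[|B]) (Y ⁻¹' {y})).toReal) * a y
      = ent (μ[|B]) Y - condEnt μ Y X := by
    have hexp : ∑ y : 𝒴, ((μ (Y ⁻¹' {y})).toReal - ((μ[|B]) (Y ⁻¹' {y})).toReal) * a y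
        = ∑ y : 𝒴, (μ (Y ⁻¹' {y})).toReal * a y
          - ∑ y : 𝒴, ((μ[|B]) (Y ⁻¹' {y})).toReal * a y := by
      rw [← Finset.sum_sub_distrib]
      exact Finset.sum_congr rfl fun y _ => by ring
    rw [hexp, hS1]
    linarith [hiii]
  exact hgoal
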